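/- Call a subset Ψ ⊆ Φ closed in Φ if for all x, y ∈ Ψ with x + y ∈ Φ one has x + y ∈ Ψ. Let p : Φ̊ → Y be ℤ-linear with p(α) ∈ Λ_s for every α ∈ Φ̊_s and p(α) ∈ Λ_ℓ for every α ∈ Φ̊_ℓ. Then: (1) if Λ_ℓ ≠ 2Λ_s and Ψ = {(α,λ) : α ∈ Φ̊_s, λ ∈ Λ_s} ∪ {(α, p(α)+s) : α ∈ Φ̊_ℓ, s ∈ S}, where S is a union of cosets of 2Λ_s with 2Λ_s ⊆ S satisfying p(α) + S ⊆ Λ_ℓ and p(α) + S ≠ Λ_ℓ for every α ∈ Φ̊_ℓ, then Ψ is not closed in Φ; (2) if Ψ = {(α, p(α)+h) : α ∈ Φ̊_s, h ∈ H} ∪ {(α,λ) : α ∈ Φ̊_ℓ, λ ∈ Λ_ℓ} for an additive subgroup H of Λ_s with Λ_ℓ ⊆ H, then Ψ is closed in Φ; (3) if Ψ = {(α, p(α)+h) : α ∈ Φ̊_s, h ∈ H} ∪ {(α, μ) : α ∈ Φ̊_ℓ, μ ∈ (p(α)+H) ∩ Λ_ℓ} for a maximal proper additive subgroup H of Λ_s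 with 2Λ_s + H = Λ_s, then Ψ is closed in Φ. -/
import Mathlib


open RealInnerProductSpace

noncomputable section

/-- The standard basis vector `e i` of `ℝ^n`. -/
def ee (n : ℕ) (i : Fin n) : EuclideanSpace ℝ (Fin n) := EuclideanSpace.single i 1

/-- The set `{±e_i : 1 ≤ i ≤ n}`. -/
def pmE (n : ℕ) : Set (EuclideanSpace ℝ (Fin n)) :=
  {v | ∃ i : Fin n, v = ee n i ∨ v = -ee n i}

/-- The set `{±e_i ± e_j : i ≠ j}`. -/
def pmEE (n : ℕ) : Set (EuclideanSpace ℝ (Fin n)) :=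
  {v | ∃ i j : Fin n, i ≠ j ∧ ∃ ε δ : ℝ, (ε = 1 ∨ ε = -1) ∧ (δ = 1 ∨ δ = -1) ∧
    v = ε • ee n i + δ • ee n j}

/-- The set `{±2e_i : 1 ≤ i ≤ n}`. -/
def pm2E (n : ℕ) : Set (EuclideanSpace ℝ (Fin n)) :=
  {v | ∃ i : Fin n, v = (2 : ℝ) • ee n i ∨ v = -((2 : ℝ) • ee n i)}

/-- The reflection `s_α(β) = β − (2⟨β,α⟩/⟨α,α⟩)α`. -/
def reflV {V : Type*} [NormedAddCommGroup V] [InnerProductSpace ℝ V] (α β : V) : V :=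
  β - (2 * ⟪β, α⟫ / ⟪α, α⟫) • α

/-- A root subsystem of `Φ` (w.r.t. a given reflection map): a nonempty subset of `Φ`
closed under the reflections in its own elements. -/
def IsRootSubsystem {X : Type*} (refl : X → X → X) (Φ Ψ : Set X) : Prop :=
  Ψ.Nonempty ∧ Ψ ⊆ Φ ∧ ∀ a ∈ Ψ, ∀ b ∈ Ψ, refl a b ∈ Ψ

/-- A maximal root subsystem of `Φ`: a proper root subsystem such that every root
subsystem `Ψ'` with `Ψ ⊆ Ψ' ≠ Φ` equals `Ψ`. -/
def IsMaximalRootSubsystem {X : Type*} (refl : X → X → X) (Φ Ψ : Set X) : Prop :=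
  IsRootSubsystem refl Φ Ψ ∧ Ψ ≠ Φ ∧
    ∀ Ψ' : Set X, IsRootSubsystem refl Φ Ψ' → Ψ ⊆ Ψ' → Ψ' ≠ Φ → Ψ' = Ψ

/-- The affine reflection `s_a(b) = b − (2⟨b₁,a₁⟩/⟨a₁,a₁⟩)·a` on `V × Y`. -/
def reflA {V Y : Type*} [NormedAddCommGroup V] [InnerProductSpace ℝ V]
    [AddCommGroup Y] [Module ℝ Y] (a b : V × Y) : V × Y :=
  b - (2 * ⟪b.1, a.1⟫ / ⟪a.1, a.1⟫) • a

/-- `p : Φ̊ → Y` is ℤ-linear: `p(s_α(β)) = p(β) − (2⟨β,α⟩/⟨α,α⟩)·p(α)` for `α, β ∈ Φ̊`. -/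
def IsZLin {V Y : Type*} [NormedAddCommGroup V] [InnerProductSpace ℝ V]
    [AddCommGroup Y] [Module ℝ Y] (Φ₀ : Set V) (p : V → Y) : Prop :=
  ∀ α ∈ Φ₀, ∀ β ∈ Φ₀, p (reflV α β) = p β - (2 * ⟪β, α⟫ / ⟪α, α⟫) • p α

/-- `Ψ` is closed in `Θ`: for all `x, y ∈ Ψ` with `x + y ∈ Θ`, one has `x + y ∈ Ψ`. -/
def IsClosedIn {X : Type*} [Add X] (Θ Ψ : Set X) : Prop :=
  ∀ x ∈ Ψ, ∀ y ∈ Ψ, x + y ∈ Θ → x + y ∈ Ψ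

lemma inner_ee (n : ℕ) (i j : Fin n) : ⟪ee n i, ee n j⟫ = if i = j then (1:ℝ) else 0 := by
  simp [ee, EuclideanSpace.inner_single_left, EuclideanSpace.single_apply, eq_comm]

lemma pm2E_iff {n : ℕ} {v : EuclideanSpace ℝ (Fin n)} :
    v ∈ pm2E n ↔ ∃ (i : Fin n) (c : ℝ), (c = 2 ∨ c = -2) ∧ v = c • ee n i := by
  constructor
  · rintro ⟨i, h | h⟩
    · exact ⟨i, 2, Or.inl rfl, h⟩
    · exact ⟨i, -2, Or.inr rfl, by rw [h, neg_smul]⟩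
  · rintro ⟨i, c, (rfl | rfl), rfl⟩
    exacts [⟨i, Or.inl rfl⟩, ⟨i, Or.inr (by rw [neg_smul])⟩]

lemma inner_self_pmEE {n : ℕ} {v : EuclideanSpace ℝ (Fin n)} (h : v ∈ pmEE n) :
    ⟪v, v⟫ = 2 := by
  obtain ⟨i, j, hij, ε, δ, hε, hδ, rfl⟩ := h
  simp only [inner_add_left, inner_add_right, real_inner_smul_left, real_inner_smul_right,
    inner_ee, if_pos rfl, if_neg hij, if_neg (Ne.symm hij)]
  rcases hε with rfl | rfl <;> rcases hδ with rfl | rfl <;> norm_num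

lemma inner_self_pm2E {n : ℕ} {v : EuclideanSpace ℝ (Fin n)} (h : v ∈ pm2E n) :
    ⟪v, v⟫ = 4 := by
  obtain ⟨i, c, hc, rfl⟩ := pm2E_iff.mp h
  simp only [real_inner_smul_left, real_inner_smul_right, inner_ee, if_pos rfl]
  rcases hc with rfl | rfl <;> norm_num

lemma inner_pmEE_pm2E {n : ℕ} {v w : EuclideanSpace ℝ (Fin n)} (hv : v ∈ pmEE n)
    (hw : w ∈ pm2E n) : ⟪v, w⟫ = 0 ∨ ⟪v, w⟫ = 2 ∨ ⟪v, w⟫ = -2 := by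
  obtain ⟨i, j, hij, ε, δ, hε, hδ, rfl⟩ := hv
  obtain ⟨k, c, hc, rfl⟩ := pm2E_iff.mp hw
  simp only [inner_add_left, real_inner_smul_left, real_inner_smul_right, inner_ee]
  by_cases hik : i = k <;> by_cases hjk : j = k <;>
    [exact absurd (hik.trans hjk.symm) hij; skip; skip; skip] <;>
    rcases hε with rfl | rfl <;> rcases hδ with rfl | rfl <;> rcases hc with rfl | rfl <;>
    simp [hik, hjk] <;> norm_num

lemma inner_pm2E_pm2E {n : ℕ} {v w : EuclideanSpace ℝ (Fin n)} (hv : v ∈ pm2E n)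
    (hw : w ∈ pm2E n) : ⟪v, w⟫ = 0 ∨ ⟪v, w⟫ = 4 ∨ ⟪v, w⟫ = -4 := by
  obtain ⟨i, c, hc, rfl⟩ := pm2E_iff.mp hv
  obtain ⟨k, d, hd, rfl⟩ := pm2E_iff.mp hw
  simp only [real_inner_smul_left, real_inner_smul_right, inner_ee]
  by_cases hik : i = k <;> rcases hc with rfl | rfl <;> rcases hd with rfl | rfl <;>
    simp [hik] <;> norm_num

lemma inner_self_root {n : ℕ} {v : EuclideanSpace ℝ (Fin n)} (h : v ∈ pmEE n ∪ pm2E n) :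
    ⟪v, v⟫ = 2 ∨ ⟪v, v⟫ = 4 :=
  h.elim (fun h => Or.inl (inner_self_pmEE h)) (fun h => Or.inr (inner_self_pm2E h))

lemma p_neg {n : ℕ} {Y : Type*} [AddCommGroup Y] [Module ℝ Y]
    {p : EuclideanSpace ℝ (Fin n) → Y} (hlin : IsZLin (pmEE n ∪ pm2E n) p)
    {β : EuclideanSpace ℝ (Fin n)} (hβ : β ∈ pmEE n ∪ pm2E n) : p (-β) = - p β := by
  have h := hlin β hβ β hβ
  have ht : 2 * ⟪β, β⟫ / ⟪β, β⟫ = 2 := by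
    rcases inner_self_root hβ with h2 | h2 <;> rw [h2] <;> norm_num
  rw [reflV, ht] at h
  have h2 : β - (2:ℝ) • β = -β := by module
  rw [h2] at h
  rw [h]; module

lemma no_LL {n : ℕ} {v w : EuclideanSpace ℝ (Fin n)} (hv : v ∈ pm2E n) (hw : w ∈ pm2E n) :
    v + w ∉ pmEE n := by
  intro h
  have h1 := inner_self_pmEE h
  rw [real_inner_add_add_self, inner_self_pm2E hv, inner_self_pm2E hw] at h1
  rcases inner_pm2E_pm2E hv hw with h2 | h2 | h2 <;> rw [h2] at h1 <;> norm_num at h1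

lemma p_add {n : ℕ} {Y : Type*} [AddCommGroup Y] [Module ℝ Y]
    {p : EuclideanSpace ℝ (Fin n) → Y} (hlin : IsZLin (pmEE n ∪ pm2E n) p)
    {α β : EuclideanSpace ℝ (Fin n)} (hα : α ∈ pmEE n ∪ pm2E n) (hβ : β ∈ pmEE n ∪ pm2E n)
    (hs : α + β ∈ pmEE n ∪ pm2E n) : p (α + β) = p α + p β := by
  have hexp : ⟪α + β, α + β⟫ = ⟪α, α⟫ + 2 * ⟪α, β⟫ + ⟪β, β⟫ := real_inner_add_add_self α β
  rcases hα with hα' | hα' <;> rcases hβ with hβ' | hβ'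
  · have ha := inner_self_pmEE hα'
    have hb := inner_self_pmEE hβ'
    rcases inner_self_root hs with hss | hss
    · have hc : ⟪α, β⟫ = -1 := by rw [hss, ha, hb] at hexp; linarith
      have ht : 2 * ⟪β, α⟫ / ⟪α, α⟫ = -1 := by rw [real_inner_comm, hc, ha]; norm_num
      have h := hlin α (Or.inl hα') β (Or.inl hβ')
      rw [reflV, ht] at h
      have h2 : β - (-1 : ℝ) • α = α + β := by module
      rw [h2] at h; rw [h]; module
    · have hc : ⟪α, β⟫ = 0 := by rw [hss, ha, hb] at hexp; linarith
      have hag : ⟪α, α + β⟫ = 2 := by rw [inner_add_right, ha, hc]; norm_num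
      have ht : 2 * ⟪α, α + β⟫ / ⟪α + β, α + β⟫ = 1 := by rw [hag, hss]; norm_num
      have h := hlin (α + β) hs α (Or.inl hα')
      rw [reflV, ht] at h
      have h2 : α - (1 : ℝ) • (α + β) = -β := by module
      rw [h2, p_neg hlin (Or.inl hβ')] at h
      have h3 : p β = p (α + β) - p α := by rw [← neg_neg (p β), h, one_smul, neg_sub]
      rw [h3]; abel
  · have ha := inner_self_pmEE hα'
    have hb := inner_self_pm2E hβ'
    have hc : ⟪α, β⟫ = -2 := by
      rcases inner_pmEE_pm2E hα' hβ' with h2 | h2 | h2 <;>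
        rcases inner_self_root hs with hss | hss <;> rw [h2, ha, hb, hss] at hexp <;>
        first | rfl | linarith
    have ht : 2 * ⟪α, β⟫ / ⟪β, β⟫ = -1 := by rw [hc, hb]; norm_num
    have h := hlin β (Or.inr hβ') α (Or.inl hα')
    rw [reflV, ht] at h
    have h2 : α - (-1 : ℝ) • β = α + β := by module
    rw [h2] at h; rw [h]; module
  · have ha := inner_self_pm2E hα'
    have hb := inner_self_pmEE hβ'
    have hc : ⟪β, α⟫ = -2 := by
      have hc0 := inner_pmEE_pm2E hβ' hα'
      rw [real_inner_comm β α] at hexp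
      rcases hc0 with h2 | h2 | h2 <;>
        rcases inner_self_root hs with hss | hss <;> rw [h2, ha, hb, hss] at hexp <;>
        first | rfl | linarith
    have ht : 2 * ⟪β, α⟫ / ⟪α, α⟫ = -1 := by rw [hc, ha]; norm_num
    have h := hlin α (Or.inr hα') β (Or.inl hβ')
    rw [reflV, ht] at h
    have h2 : β - (-1 : ℝ) • α = α + β := by module
    rw [h2] at h; rw [h]; module
  · exfalso
    have ha := inner_self_pm2E hα'
    have hb := inner_self_pm2E hβ'
    rcases inner_pm2E_pm2E hα' hβ' with h2 | h2 | h2 <;>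
      rcases inner_self_root hs with hss | hss <;> rw [h2, ha, hb, hss] at hexp <;> linarith

/-- gradient `C_n`, `n ≥ 3`: closedness of the three forms of maximal
root subsystems with full gradient: form (1) is never closed, forms (2) and (3) are
always closed. -/
theorem stmt_16 (n : ℕ) (hn : 3 ≤ n) (Y : Type*) [AddCommGroup Y] [Module ℝ Y]
    [FiniteDimensional ℝ Y]
    (Λs : AddSubgroup Y) (hspan : Submodule.span ℝ (Λs : Set Y) = ⊤)
    (Λℓ : Set Y) (h0ℓ : (0 : Y) ∈ Λℓ) (hℓs : Λℓ ⊆ (Λs : Set Y))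
    (hℓneg : ∀ x ∈ Λℓ, -x ∈ Λℓ)
    (hℓ2 : ∀ x ∈ Λℓ, ∀ y ∈ Λs, x + 2 • y ∈ Λℓ)
    (Φ : Set (EuclideanSpace ℝ (Fin n) × Y))
    (hΦ : Φ = {x | x.1 ∈ pmEE n ∧ x.2 ∈ Λs} ∪ {x | x.1 ∈ pm2E n ∧ x.2 ∈ Λℓ})
    (p : EuclideanSpace ℝ (Fin n) → Y)
    (hlin : IsZLin (pmEE n ∪ pm2E n) p)
    (hps : ∀ α ∈ pmEE n, p α ∈ Λs)
    (hpl : ∀ α ∈ pm2E n, p α ∈ Λℓ) :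
    -- (1)
    ((Λℓ ≠ {y | ∃ x ∈ Λs, y = 2 • x}) →
      ∀ S : Set Y,
        (∀ x ∈ Λs, 2 • x ∈ S) →
        (∀ t ∈ S, ∀ x ∈ Λs, t + 2 • x ∈ S) →
        (∀ α ∈ pm2E n, ∀ t ∈ S, p α + t ∈ Λℓ) →
        (∀ α ∈ pm2E n, {y | ∃ t ∈ S, y = p α + t} ≠ Λℓ) →
        ∀ Ψ : Set (EuclideanSpace ℝ (Fin n) × Y),
          Ψ = {x | x.1 ∈ pmEE n ∧ x.2 ∈ Λs} ∪
            {x | ∃ α ∈ pm2E n, ∃ s ∈ S, x = (α, p α + s)} →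
          ¬ IsClosedIn Φ Ψ) ∧
    -- (2)
    (∀ H : AddSubgroup Y, H ≤ Λs → Λℓ ⊆ (H : Set Y) →
      ∀ Ψ : Set (EuclideanSpace ℝ (Fin n) × Y),
        Ψ = {x | ∃ α ∈ pmEE n, ∃ h ∈ H, x = (α, p α + h)} ∪
          {x | x.1 ∈ pm2E n ∧ x.2 ∈ Λℓ} →
        IsClosedIn Φ Ψ) ∧
    -- (3)
    (∀ H : AddSubgroup Y, H ≤ Λs → H ≠ Λs →
      (∀ N : AddSubgroup Y, H ≤ N → N ≤ Λs → N = H ∨ N = Λs) →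
      {y | ∃ x ∈ Λs, ∃ h ∈ H, y = 2 • x + h} = (Λs : Set Y) →
      ∀ Ψ : Set (EuclideanSpace ℝ (Fin n) × Y),
        Ψ = {x | ∃ α ∈ pmEE n, ∃ h ∈ H, x = (α, p α + h)} ∪
          {x | x.1 ∈ pm2E n ∧ x.2 ∈ Λℓ ∧ ∃ h ∈ H, x.2 = p x.1 + h} →
        IsClosedIn Φ Ψ) := by

  refine ⟨?_, ?_, ?_⟩
  · -- Part (1)
    intro _hℓne S _hS1 _hS2 hS3 hS4 Ψ hΨ hclosed
    set i0 : Fin n := ⟨0, by omega⟩ with hi0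
    set i1 : Fin n := ⟨1, by omega⟩ with hi1
    have h01 : i0 ≠ i1 := by simp [hi0, hi1, Fin.ext_iff]
    have hα0 : (2 : ℝ) • ee n i0 ∈ pm2E n := ⟨i0, Or.inl rfl⟩
    obtain ⟨μ, hμℓ, hμnot⟩ : ∃ μ ∈ Λℓ, ¬ ∃ t ∈ S, μ = p ((2 : ℝ) • ee n i0) + t := by
      by_contra hcon
      push_neg at hcon
      refine hS4 _ hα0 (Set.Subset.antisymm ?_ ?_)
      · rintro y ⟨t, ht, rfl⟩; exact hS3 _ hα0 t ht
      · intro y hy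
        obtain ⟨t, ht, hty⟩ := hcon y hy
        exact ⟨t, ht, hty⟩
    have hx1 : (ee n i0 + ee n i1) ∈ pmEE n :=
      ⟨i0, i1, h01, 1, 1, Or.inl rfl, Or.inl rfl, by module⟩
    have hy1 : (ee n i0 - ee n i1) ∈ pmEE n :=
      ⟨i0, i1, h01, 1, -1, Or.inl rfl, Or.inr rfl, by module⟩
    have hxΨ : ((ee n i0 + ee n i1, μ) : EuclideanSpace ℝ (Fin n) × Y) ∈ Ψ := by
      rw [hΨ]; exact Or.inl ⟨hx1, hℓs hμℓ⟩
    have hyΨ : ((ee n i0 - ee n i1, (0 : Y)) : EuclideanSpace ℝ (Fin n) × Y) ∈ Ψ := by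
      rw [hΨ]; exact Or.inl ⟨hy1, Λs.zero_mem⟩
    have hsum : ((ee n i0 + ee n i1, μ) : EuclideanSpace ℝ (Fin n) × Y) +
        (ee n i0 - ee n i1, (0 : Y)) = ((2 : ℝ) • ee n i0, μ) := by
      rw [Prod.mk_add_mk, Prod.mk.injEq]
      exact ⟨by module, add_zero μ⟩
    have hΦm : (((2 : ℝ) • ee n i0, μ) : EuclideanSpace ℝ (Fin n) × Y) ∈ Φ := by
      rw [hΦ]; exact Or.inr ⟨hα0, hμℓ⟩
    have hmem := hclosed _ hxΨ _ hyΨ (by rw [hsum]; exact hΦm)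
    rw [hsum, hΨ] at hmem
    rcases hmem with hmem | hmem
    · have h2 : (2 : ℝ) = 4 := by
        rw [← inner_self_pmEE hmem.1]
        exact inner_self_pm2E hα0
      norm_num at h2
    · obtain ⟨α, hα, s, hs, heq⟩ := hmem
      rw [Prod.mk.injEq] at heq
      exact hμnot ⟨s, hs, by rw [heq.1]; exact heq.2⟩
  · -- Part (2)
    intro H _hHle hℓH Ψ hΨ x hx y hy hxy
    obtain ⟨x1, x2⟩ := x
    obtain ⟨y1, y2⟩ := y
    rw [hΨ] at hx hy ⊢
    rw [hΦ] at hxy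
    rw [Prod.mk_add_mk] at hxy ⊢
    simp only [Set.mem_union, Set.mem_setOf_eq, Prod.mk.injEq] at hx hy hxy ⊢
    rcases hx with ⟨α, hα, h, hh, rfl, rfl⟩ | ⟨hx1, hx2⟩
    · rcases hy with ⟨β, hβ, h', hh', rfl, rfl⟩ | ⟨hy1, hy2⟩
      · rcases hxy with ⟨hs1, _⟩ | ⟨hs1, hs2⟩
        · exact Or.inl ⟨x1 + y1, hs1, h + h', H.add_mem hh hh', rfl,
            by rw [p_add hlin (Or.inl hα) (Or.inl hβ) (Or.inl hs1)]; abel⟩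
        · exact Or.inr ⟨hs1, hs2⟩
      · rcases hxy with ⟨hs1, _⟩ | ⟨hs1, hs2⟩
        · exact Or.inl ⟨x1 + y1, hs1, h + (y2 - p y1),
            H.add_mem hh (H.sub_mem (hℓH hy2) (hℓH (hpl y1 hy1))), rfl,
            by rw [p_add hlin (Or.inl hα) (Or.inr hy1) (Or.inl hs1)]; abel⟩
        · exact Or.inr ⟨hs1, hs2⟩
    · rcases hy with ⟨β, hβ, h', hh', rfl, rfl⟩ | ⟨hy1, hy2⟩
      · rcases hxy with ⟨hs1, _⟩ | ⟨hs1, hs2⟩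
        · exact Or.inl ⟨x1 + y1, hs1, h' + (x2 - p x1),
            H.add_mem hh' (H.sub_mem (hℓH hx2) (hℓH (hpl x1 hx1))), rfl,
            by rw [p_add hlin (Or.inr hx1) (Or.inl hβ) (Or.inl hs1)]; abel⟩
        · exact Or.inr ⟨hs1, hs2⟩
      · rcases hxy with ⟨hs1, _⟩ | ⟨hs1, hs2⟩
        · exact absurd hs1 (no_LL hx1 hy1)
        · exact Or.inr ⟨hs1, hs2⟩
  · -- Part (3)
    intro H _hHle _hHne _hHmax _h2H Ψ hΨ x hx y hy hxy
    obtain ⟨x1, x2⟩ := x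
    obtain ⟨y1, y2⟩ := y
    rw [hΨ] at hx hy ⊢
    rw [hΦ] at hxy
    rw [Prod.mk_add_mk] at hxy ⊢
    simp only [Set.mem_union, Set.mem_setOf_eq, Prod.mk.injEq] at hx hy hxy ⊢
    rcases hx with ⟨α, hα, h, hh, rfl, rfl⟩ | ⟨hx1, hx2, h, hh, rfl⟩
    · rcases hy with ⟨β, hβ, h', hh', rfl, rfl⟩ | ⟨hy1, hy2, h', hh', rfl⟩
      · rcases hxy with ⟨hs1, _⟩ | ⟨hs1, hs2⟩
        · exact Or.inl ⟨x1 + y1, hs1, h + h', H.add_mem hh hh', rfl,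
            by rw [p_add hlin (Or.inl hα) (Or.inl hβ) (Or.inl hs1)]; abel⟩
        · exact Or.inr ⟨hs1, hs2, h + h', H.add_mem hh hh',
            by rw [p_add hlin (Or.inl hα) (Or.inl hβ) (Or.inr hs1)]; abel⟩
      · rcases hxy with ⟨hs1, _⟩ | ⟨hs1, hs2⟩
        · exact Or.inl ⟨x1 + y1, hs1, h + h', H.add_mem hh hh', rfl,
            by rw [p_add hlin (Or.inl hα) (Or.inr hy1) (Or.inl hs1)]; abel⟩
        · exact Or.inr ⟨hs1, hs2, h + h', H.add_mem hh hh',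
            by rw [p_add hlin (Or.inl hα) (Or.inr hy1) (Or.inr hs1)]; abel⟩
    · rcases hy with ⟨β, hβ, h', hh', rfl, rfl⟩ | ⟨hy1, hy2, h', hh', rfl⟩
      · rcases hxy with ⟨hs1, _⟩ | ⟨hs1, hs2⟩
        · exact Or.inl ⟨x1 + y1, hs1, h + h', H.add_mem hh hh', rfl,
            by rw [p_add hlin (Or.inr hx1) (Or.inl hβ) (Or.inl hs1)]; abel⟩
        · exact Or.inr ⟨hs1, hs2, h + h', H.add_mem hh hh',
            by rw [p_add hlin (Or.inr hx1) (Or.inl hβ) (Or.inr hs1)]; abel⟩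
      · rcases hxy with ⟨hs1, _⟩ | ⟨hs1, hs2⟩
        · exact absurd hs1 (no_LL hx1 hy1)
        · exact Or.inr ⟨hs1, hs2, h + h', H.add_mem hh hh',
            by rw [p_add hlin (Or.inr hx1) (Or.inr hy1) (Or.inr hs1)]; abel⟩
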